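/- Let n ≥ 4 be an even integer and q a nonzero complex number. If complex numbers a_0, a_1, …, a_n, b satisfy Σ_{i=0}^{n} a_i·z_2(p)^i + b·z_1(p) = 0 for every critical point p of W_0, then a_0 = a_1 = ⋯ = a_n = b = 0. -/

import Mathlib

open Finset

/-- One-based access to the coordinates of a point `z ∈ ℂⁿ`: `zc n z j = z_j` for
`1 ≤ j ≤ n` (and `0` for out-of-range indices, which are never used). -/
noncomputable def zc (n : ℕ) (z : Fin n → ℂ) (j : ℕ) : ℂ :=
  if h : 1 ≤ j ∧ j ≤ n then z ⟨j - 1, by omega⟩ else 0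

/-- The mirror Landau–Ginzburg potential of the quadric `Qⁿ`:
`W₀(z) = q z₁² z_n/(z₁⋯z_n − 1) + z₂ + ∑_{i=2}^{n−1} z_i z_{i+1}`,
defined on `Zⁿ = {z ∈ ℂⁿ : z₁⋯z_n ≠ 1}`. -/
noncomputable def W0 (n : ℕ) (q : ℂ) (z : Fin n → ℂ) : ℂ :=
  q * (zc n z 1) ^ 2 * zc n z n / ((∏ j, z j) - 1)
    + zc n z 2 + ∑ i ∈ Finset.Icc 2 (n - 1), zc n z i * zc n z (i + 1)

/-- `z` is a critical point of `W₀` in `Zⁿ`: `z₁⋯z_n ≠ 1` and all `n` partial derivatives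
`∂W₀/∂z_j` vanish at `z`. -/
def IsCritPt (n : ℕ) (q : ℂ) (z : Fin n → ℂ) : Prop :=
  (∏ j, z j) ≠ 1 ∧
    ∀ j : Fin n, deriv (fun t => W0 n q (Function.update z j t)) (z j) = 0

/-- Membership in `V(I₁)`: `z_{2i+1} = 1` for `1 ≤ i ≤ n/2−1`, `z_{2i} = z_n` for
`1 ≤ i ≤ n/2`, `q z₁² = 1`, and `z₁ z_n^{n/2} = 2`. -/
def MemV1 (n : ℕ) (q : ℂ) (z : Fin n → ℂ) : Prop :=
  (∀ i : ℕ, 1 ≤ i → i ≤ n / 2 - 1 → zc n z (2 * i + 1) = 1) ∧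
    (∀ i : ℕ, 1 ≤ i → i ≤ n / 2 → zc n z (2 * i) = zc n z n) ∧
    q * (zc n z 1) ^ 2 = 1 ∧ zc n z 1 * (zc n z n) ^ (n / 2) = 2

/-- Membership in `V(I₂)`: `z_{2i+1} = (−1)^i` for `1 ≤ i ≤ n/2−1`, `z_{2i} = 0` for
`1 ≤ i ≤ n/2`, and `q z₁² = (−1)^{(n−2)/2}`. -/
def MemV2 (n : ℕ) (q : ℂ) (z : Fin n → ℂ) : Prop :=
  (∀ i : ℕ, 1 ≤ i → i ≤ n / 2 - 1 → zc n z (2 * i + 1) = (-1 : ℂ) ^ i) ∧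
    (∀ i : ℕ, 1 ≤ i → i ≤ n / 2 → zc n z (2 * i) = 0) ∧
    q * (zc n z 1) ^ 2 = (-1 : ℂ) ^ ((n - 2) / 2)


/-!
Two explicit families of critical points already separate the functions. On `V(I₂)` one has
`z₂ = 0`, while `z₁` can be either square root `±x` of `(-1)^{(n-2)/2}/q`; this forces
`a₀ = b = 0`. On `V(I₁)` one has `z₂ = z_n = y` for every `y` with `yⁿ = 4q` (and
`z₁ = 2/y^{n/2}`), so the polynomial `∑ aᵢ Yⁱ` of degree at most `n` vanishes at `0` and at
the `n` distinct `n`-th roots of `4q`, hence is zero.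

Criticality of these points is read off the partial derivatives of `W₀` (quotient rule):
on `V(I₁)` the product `z₁⋯z_n` equals `2`, so `∂(z₁⋯z_n)/∂z_k = 2/z_k`; on `V(I₂)` both
`z₁⋯z_n` and `z_n` vanish, so the fraction only enters `∂W₀/∂z_n`, as `-q z₁²`.
-/

open Function

theorem sum_Icc_boole_mul_add_mul_boole {R : Type*} [Semiring R] (f : ℕ → R) {k : ℕ}
    (hk : 1 ≤ k) (a b : ℕ) :
    ∑ i ∈ Icc a b, ((if i = k then 1 else 0) * f (i + 1) + f i * (if i + 1 = k then 1 else 0))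
      = (if a ≤ k ∧ k ≤ b then f (k + 1) else 0)
        + (if a + 1 ≤ k ∧ k ≤ b + 1 then f (k - 1) else 0) := by
  simp only [sum_add_distrib, boole_mul, mul_boole, show ∀ i, i + 1 = k ↔ i = k - 1 by omega,
    sum_ite_eq', mem_Icc]
  congr 1
  split_ifs <;> first | rfl | omega

open Polynomial in
theorem eq_zero_of_sum_mul_pow_eq_zero {R : Type*} [CommRing R] [IsDomain R] {N : ℕ}
    {a : ℕ → R} (s : Finset R) (hs : N < #s)
    (h : ∀ y ∈ s, ∑ i ∈ range (N + 1), a i * y ^ i = 0) : ∀ i ≤ N, a i = 0 := by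
  set p : R[X] := ∑ i ∈ range (N + 1), C (a i) * X ^ i
  have hp : p = 0 := by
    refine eq_zero_of_natDegree_lt_card_of_eval_eq_zero' p s (fun y hy => ?_) ?_
    · simpa [p, eval_finsetSum] using h y hy
    · refine lt_of_le_of_lt (natDegree_sum_le_of_forall_le _ _ fun i hi => ?_) hs
      exact (natDegree_C_mul_X_pow_le _ _).trans (by simpa [Nat.lt_succ_iff] using hi)
  intro i hi
  simpa [p, finsetSum_coeff, coeff_C_mul_X_pow, Nat.lt_succ_iff.mpr hi] using
    congrArg (coeff · i) hp

theorem Complex.card_nthRootsFinset {n : ℕ} (hn : n ≠ 0) {a : ℂ} (ha : a ≠ 0) :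
    #(Polynomial.nthRootsFinset n a) = n := by
  classical
  have hζ := Complex.isPrimitiveRoot_exp n hn
  rw [Polynomial.nthRootsFinset_def, Multiset.toFinset_card_of_nodup (hζ.nthRoots_nodup ha),
    hζ.card_nthRoots, if_pos (IsAlgClosed.exists_pow_nat_eq a (Nat.pos_of_ne_zero hn))]

theorem Complex.exists_ne_zero_mul_sq_eq {q c : ℂ} (hq : q ≠ 0) (hc : c ≠ 0) :
    ∃ x ≠ 0, q * x ^ 2 = c := by
  obtain ⟨x, hx⟩ := IsAlgClosed.exists_pow_nat_eq (c / q) two_pos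
  refine ⟨x, ?_, by rw [hx]; field_simp⟩
  rintro rfl
  exact hc (by simpa [eq_comm, hq] using hx)

section MirrorQuadric

variable {n : ℕ}

theorem zc_of_le {z : Fin n → ℂ} {k : ℕ} (h1 : 1 ≤ k) (h2 : k ≤ n) :
    zc n z k = z ⟨k - 1, by omega⟩ := dif_pos ⟨h1, h2⟩

theorem zc_succ (z : Fin n → ℂ) (i : Fin n) : zc n z (i + 1) = z i :=
  zc_of_le (by omega) i.isLt

def ofCoords (n : ℕ) (w : ℕ → ℂ) : Fin n → ℂ := fun i => w (i + 1)

theorem zc_ofCoords (w : ℕ → ℂ) (k : ℕ) (h1 : 1 ≤ k) (h2 : k ≤ n) :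
    zc n (ofCoords n w) k = w k := by
  rw [zc_of_le h1 h2, ofCoords, Nat.sub_add_cancel h1]

theorem hasDerivAt_zc_update (z : Fin n → ℂ) (j : Fin n) (k : ℕ) (t : ℂ) :
    HasDerivAt (fun s => zc n (update z j s) k) (if k = j + 1 then 1 else 0) t := by
  by_cases hk : 1 ≤ k ∧ k ≤ n
  · simp only [zc_of_le hk.1 hk.2, update_apply, Fin.ext_iff,
      show k - 1 = j ↔ k = j + 1 by omega]
    split_ifs
    · exact hasDerivAt_id t
    · exact hasDerivAt_const t _
  · simp only [zc, hk, dite_false]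
    rw [if_neg (by omega)]
    exact hasDerivAt_const t _

theorem hasDerivAt_prod_update (z : Fin n → ℂ) (j : Fin n) (t : ℂ) :
    HasDerivAt (fun s => ∏ i, update z j s i) (∏ i ∈ univ.erase j, z i) t := by
  simp only [prod_update_of_mem (mem_univ j), sdiff_singleton_eq_erase]
  simpa using (hasDerivAt_id t).mul_const (∏ i ∈ univ.erase j, z i)

theorem deriv_W0_update (q : ℂ) {z : Fin n → ℂ} (hz : ∏ i, z i ≠ 1) (j : Fin n) :
    deriv (fun t => W0 n q (update z j t)) (z j) =
      (q * (2 * zc n z 1 * (if j.val = 0 then 1 else 0) * zc n z n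
          + zc n z 1 ^ 2 * (if j.val + 1 = n then 1 else 0)) * (∏ i, z i - 1)
        - q * zc n z 1 ^ 2 * zc n z n * ∏ i ∈ univ.erase j, z i) / (∏ i, z i - 1) ^ 2
      + (if j.val = 1 then 1 else 0)
      + (if 2 ≤ j.val + 1 ∧ j.val + 1 ≤ n - 1 then zc n z (j + 2) else 0)
      + (if 3 ≤ j.val + 1 then zc n z j else 0) := by
  have hd := hasDerivAt_zc_update z j
  have hW := ((((hd 1 (z j)).pow 2).const_mul q).mul (hd n (z j))).div
    ((hasDerivAt_prod_update z j (z j)).sub_const 1) (by simpa using sub_ne_zero.mpr hz)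
    |>.add (hd 2 (z j))
    |>.add (HasDerivAt.fun_sum (u := Icc 2 (n - 1)) fun i _ => (hd i (z j)).mul (hd (i + 1) (z j)))
  rw [show deriv (fun t => W0 n q (update z j t)) (z j) = _ from hW.deriv]
  have hj := j.isLt
  simp only [update_eq_self, Pi.mul_apply, Pi.pow_apply,
    sum_Icc_boole_mul_add_mul_boole _ (Nat.le_add_left 1 j),
    show 1 = j.val + 1 ↔ j.val = 0 by omega, show n = j.val + 1 ↔ j.val + 1 = n by omega,
    show 2 = j.val + 1 ↔ j.val = 1 by omega, Nat.add_sub_cancel,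
    show 2 + 1 ≤ j.val + 1 ∧ j.val + 1 ≤ n - 1 + 1 ↔ 3 ≤ j.val + 1 by omega]
  ring

theorem MemV2.prod_eq_zero {q : ℂ} {z : Fin n → ℂ} (hn : 2 ≤ n) (hz : MemV2 n q z) :
    ∏ i, z i = 0 :=
  Finset.prod_eq_zero (mem_univ (⟨1, hn⟩ : Fin n))
    ((zc_succ z _).symm.trans (hz.2.1 1 le_rfl (by omega)))

theorem isCritPt_of_memV2 {q : ℂ} {z : Fin n → ℂ} (hn : 4 ≤ n) (hev : Even n)
    (hz : MemV2 n q z) : IsCritPt n q z := by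
  have hP := hz.prod_eq_zero (by omega)
  obtain ⟨hodd, heven, hq⟩ := hz
  obtain ⟨m, rfl⟩ := hev
  have hzn : zc (m + m) z (m + m) = 0 := by simpa [← two_mul] using heven m (by omega) (by omega)
  refine ⟨by simp [hP], fun j => ?_⟩
  rw [deriv_W0_update q (by simp [hP]) j, hP, hzn]
  have hj := j.isLt
  -- cases on `k = j + 1`: `k = 1`, odd `k ≥ 3`, `k = 2`, `k = n`, even `4 ≤ k ≤ n - 2`
  obtain ⟨i, hi | hi⟩ := Nat.even_or_odd' j.val <;> rw [hi]
  · rcases Nat.eq_zero_or_pos i with rfl | hi0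
    · simp (disch := omega) only [if_neg]
      ring
    · rw [show 2 * i + 2 = 2 * (i + 1) by ring, heven (i + 1) (by omega) (by omega),
        heven i hi0 (by omega)]
      simp (disch := omega) only [if_pos, if_neg]
      ring
  · rcases Nat.eq_zero_or_pos i with rfl | hi0
    · rw [hodd 1 le_rfl (by omega)]
      simp (disch := omega) only [if_pos, if_neg, if_true]
      ring
    rcases eq_or_ne (2 * i + 1 + 1) (m + m) with hin | hin
    · have hzi : zc (m + m) z (2 * i + 1) = (-1) ^ ((m + m - 2) / 2) := by
        rw [show (m + m - 2) / 2 = i by omega]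
        exact hodd i hi0 (by omega)
      rw [hzi]
      simp (disch := omega) only [if_pos, if_neg]
      linear_combination -hq
    · rw [show 2 * i + 1 + 2 = 2 * (i + 1) + 1 by ring, hodd (i + 1) (by omega) (by omega),
        hodd i hi0 (by omega)]
      simp (disch := omega) only [if_pos, if_neg]
      ring

theorem MemV1.prod_eq {q : ℂ} {z : Fin n → ℂ} (hn : 2 ≤ n) (hev : Even n)
    (hz : MemV1 n q z) :
    ∏ i, z i = zc n z 1 * zc n z n ^ (n / 2) := by
  obtain ⟨hodd, heven, -, -⟩ := hz
  have hpairs : ∀ m, 1 ≤ m → m ≤ n / 2 →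
      ∏ i ∈ range (2 * m), zc n z (i + 1) = zc n z 1 * zc n z n ^ m := by
    intro m hm1 hm
    induction m, hm1 using Nat.le_induction with
    | base => simp [prod_range_succ, heven 1 le_rfl hm]
    | succ m hm1 ih =>
      rw [show 2 * (m + 1) = 2 * m + 1 + 1 by ring, prod_range_succ, prod_range_succ,
        ih (by omega), hodd m hm1 (by omega), show 2 * m + 1 + 1 = 2 * (m + 1) by ring,
        heven (m + 1) (by omega) hm]
      ring
  calc ∏ i, z i = ∏ i ∈ range n, zc n z (i + 1) := by
        rw [← Fin.prod_univ_eq_prod_range]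
        simp only [zc_succ]
    _ = ∏ i ∈ range (2 * (n / 2)), zc n z (i + 1) := by rw [Nat.two_mul_div_two_of_even hev]
    _ = _ := hpairs _ (by omega) le_rfl

theorem isCritPt_of_memV1 {q : ℂ} {z : Fin n → ℂ} (hn : 4 ≤ n) (hev : Even n)
    (hz : MemV1 n q z) : IsCritPt n q z := by
  have hP := hz.prod_eq (by omega) hev
  obtain ⟨hodd, heven, hq, hxy⟩ := hz
  rw [hxy] at hP
  refine ⟨by rw [hP]; norm_num, fun j => ?_⟩
  have hc : (∏ i ∈ univ.erase j, z i) * zc n z (j + 1) = 2 := by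
    rw [zc_succ, prod_erase_mul _ _ (mem_univ j), hP]
  rw [deriv_W0_update q (by rw [hP]; norm_num) j, hP]
  generalize ∏ i ∈ univ.erase j, z i = c at hc
  obtain ⟨m, rfl⟩ := hev
  set x := zc (m + m) z 1
  set y := zc (m + m) z (m + m)
  have hj := j.isLt
  -- same cases on `k = j + 1` as for `V(I₂)`
  obtain ⟨i, hi | hi⟩ := Nat.even_or_odd' j.val <;> rw [hi] at hc ⊢
  · rcases Nat.eq_zero_or_pos i with rfl | hi0
    · simp (disch := omega) only [if_neg, if_true]
      linear_combination (-q * x * y) * hc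
    · rw [show 2 * i + 2 = 2 * (i + 1) by ring, heven (i + 1) (by omega) (by omega),
        heven i hi0 (by omega)]
      rw [hodd i hi0 (by omega)] at hc
      simp (disch := omega) only [if_pos, if_neg]
      linear_combination (-y) * hc - y * c * hq
  · rw [show 2 * i + 1 + 1 = 2 * (i + 1) by ring, heven (i + 1) (by omega) (by omega)] at hc
    rcases Nat.eq_zero_or_pos i with rfl | hi0
    · rw [hodd 1 le_rfl (by omega)]
      simp (disch := omega) only [if_pos, if_neg, if_true]
      linear_combination (-1) * hc - y * c * hq
    rcases eq_or_ne (2 * i + 1 + 1) (m + m) with hin | hin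
    · rw [hodd i hi0 (by omega)]
      simp (disch := omega) only [if_pos, if_neg]
      linear_combination (-1) * hc - (y * c - 1) * hq
    · rw [show 2 * i + 1 + 2 = 2 * (i + 1) + 1 by ring, hodd (i + 1) (by omega) (by omega),
        hodd i hi0 (by omega)]
      simp (disch := omega) only [if_pos, if_neg]
      linear_combination (-1) * hc - y * c * hq

theorem exists_memV1 {q x y : ℂ} (hn : 2 ≤ n) (hev : Even n) (hx : q * x ^ 2 = 1)
    (hxy : x * y ^ (n / 2) = 2) : ∃ z, MemV1 n q z ∧ zc n z 2 = y := by
  set w : ℕ → ℂ := fun k => if k = 1 then x else if Even k then y else 1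
  have hw := zc_ofCoords (n := n) w
  have h1 : zc n (ofCoords n w) 1 = x := by rw [hw 1 le_rfl (by omega)]; simp [w]
  have hn' : zc n (ofCoords n w) n = y := by rw [hw n (by omega) le_rfl]; simp [w, hev]; omega
  refine ⟨ofCoords n w,
    ⟨fun i hi1 hi => ?_, fun i hi1 hi => ?_, by rw [h1, hx], by rw [h1, hn', hxy]⟩, ?_⟩
  · rw [hw _ (by omega) (by omega)]; simp [w, parity_simps]; omega
  · rw [hw _ (by omega) (by omega), hn']; simp [w]
  · rw [hw 2 (by omega) hn]; simp [w]

theorem exists_memV2 {q x : ℂ} (hn : 2 ≤ n) (hx : q * x ^ 2 = (-1) ^ ((n - 2) / 2)) :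
    ∃ z, MemV2 n q z ∧ zc n z 1 = x := by
  set w : ℕ → ℂ := fun k => if k = 1 then x else if Even k then 0 else (-1) ^ (k / 2)
  have hw := zc_ofCoords (n := n) w
  have h1 : zc n (ofCoords n w) 1 = x := by rw [hw 1 le_rfl (by omega)]; simp [w]
  refine ⟨ofCoords n w, ⟨fun i hi1 hi => ?_, fun i hi1 hi => ?_, by rw [h1, hx]⟩, h1⟩
  · rw [hw _ (by omega) (by omega)]
    simp [w, parity_simps, show i ≠ 0 by omega, show (2 * i + 1) / 2 = i by omega]
  · rw [hw _ (by omega) (by omega)]; simp [w]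

theorem exists_memV1_of_pow_eq {q y : ℂ} (hn : 2 ≤ n) (hev : Even n) (hq : q ≠ 0)
    (hy : y ^ n = 4 * q) : ∃ z, MemV1 n q z ∧ zc n z 2 = y := by
  have hyn : (y ^ (n / 2)) ^ 2 = 4 * q := by
    rw [← pow_mul, Nat.div_mul_cancel (even_iff_two_dvd.mp hev), hy]
  have hy0 : y ^ (n / 2) ≠ 0 := by
    intro h0; rw [h0] at hyn; exact hq (by linear_combination -hyn / 4)
  exact exists_memV1 (x := 2 / y ^ (n / 2)) hn hev (by field_simp; linear_combination -hyn)
    (by field_simp)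

end MirrorQuadric

/-- **Linear independence of `1, z₂, …, z₂ⁿ, z₁` on the critical points.**
For even `n ≥ 4` and `q ≠ 0`: if `a₀, …, a_n, b ∈ ℂ` satisfy
`∑_{i=0}^{n} aᵢ z₂(p)ⁱ + b z₁(p) = 0` at every critical point `p` of `W₀`, then all the
`aᵢ` and `b` vanish (so `{z₂ⁱ}_{0≤i≤n} ∪ {z₁}` is a basis of the Milnor ring). -/
theorem quadric_mirror_milnor_basis (n : ℕ) (hn : 4 ≤ n) (hev : Even n)
    (q : ℂ) (hq : q ≠ 0) (a : ℕ → ℂ) (b : ℂ)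
    (h : ∀ z : Fin n → ℂ, IsCritPt n q z →
      (∑ i ∈ Finset.range (n + 1), a i * (zc n z 2) ^ i) + b * zc n z 1 = 0) :
    (∀ i ≤ n, a i = 0) ∧ b = 0 := by
  have hV2 : ∀ x : ℂ, q * x ^ 2 = (-1) ^ ((n - 2) / 2) → a 0 + b * x = 0 := by
    intro x hx
    obtain ⟨z, hz, rfl⟩ := exists_memV2 (by omega) hx
    simpa [hz.2.1 1 le_rfl (by omega), sum_range_succ'] using h z (isCritPt_of_memV2 hn hev hz)
  obtain ⟨x, hx0, hqx⟩ := Complex.exists_ne_zero_mul_sq_eq hq (c := (-1) ^ ((n - 2) / 2))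
    (by simp)
  have hb : b = 0 := by
    have h2x : b * (2 * x) = 0 := by
      linear_combination hV2 x hqx - hV2 (-x) (by rwa [neg_sq])
    simpa [hx0] using h2x
  have ha0 : a 0 = 0 := by simpa [hb] using hV2 x hqx
  have hV1 : ∀ y : ℂ, y ^ n = 4 * q → ∑ i ∈ range (n + 1), a i * y ^ i = 0 := by
    intro y hy
    obtain ⟨z, hz, hz2⟩ := exists_memV1_of_pow_eq (by omega) hev hq hy
    simpa [hz2, hb] using h z (isCritPt_of_memV1 hn hev hz)
  have h4q : 4 * q ≠ 0 := by simpa using hq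
  refine ⟨eq_zero_of_sum_mul_pow_eq_zero (insert 0 (Polynomial.nthRootsFinset n (4 * q))) ?_
    fun y hy => ?_, hb⟩
  · rw [card_insert_of_notMem fun h0 => Polynomial.ne_zero_of_mem_nthRootsFinset h4q h0 rfl,
      Complex.card_nthRootsFinset (by omega) h4q]
    omega
  · rcases mem_insert.mp hy with rfl | hy
    · simp [sum_range_succ', ha0]
    · exact hV1 y ((Polynomial.mem_nthRootsFinset (by omega) _).mp hy)
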